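/- arXiv:1204.3513 — 2 statements merged into one kernel-verified Lean document; each statement's English description precedes it below -/
import Mathlib

section
/- δ-soundness of the ICP 'sat' answer: Let f₁,...,f_m : ℝⁿ → ℝ, δ > 0, and let ε > 0 be such that for each i and all x, y in the initial box B₀, ‖x-y‖ < ε implies |fᵢ(x) - fᵢ(y)| < δ. Let ♯fᵢ be interval extensions of fᵢ. Suppose B ⊆ B₀ is a nonempty box with ‖B‖ < ε (every side has length < ε) such that 0 ∈ ♯fᵢ(B) for each i, where each ♯fᵢ(B) contains fᵢ(B). Then every point a ∈ B satisfies |fᵢ(a)| < δ for all i, i.e., a witnesses the δ-weakening of the conjunction ⋀ᵢ fᵢ(x) = 0. -/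
theorem stmt_14 (n m : ℕ) (f : Fin m → (Fin n → ℝ) → ℝ) (δ ε : ℝ)
    (hδ : 0 < δ) (hε : 0 < ε)
    (B₀ B : Set (Fin n → ℝ)) (hBB₀ : B ⊆ B₀) (hBne : B.Nonempty)
    (hBcpt : IsCompact B)
    (hcont : ∀ i, ContinuousOn (f i) B₀)
    (hmod : ∀ i : Fin m, ∀ x ∈ B₀, ∀ y ∈ B₀, ‖x - y‖ < ε → |f i x - f i y| < δ)
    (hsmall : ∀ x ∈ B, ∀ y ∈ B, ‖x - y‖ < ε)
    (hhull : ∀ i : Fin m, (0:ℝ) ∈ Set.Icc (sInf (f i '' B)) (sSup (f i '' B))) :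
    ∀ a ∈ B, ∀ i : Fin m, |f i a| < δ := by
  intro a ha i
  obtain ⟨x, hx, hxmin⟩ := hBcpt.exists_isMinOn hBne ((hcont i).mono hBB₀)
  obtain ⟨y, hy, hymax⟩ := hBcpt.exists_isMaxOn hBne ((hcont i).mono hBB₀)
  have himg : (f i '' B).Nonempty := hBne.image _
  have hinf : sInf (f i '' B) = f i x := by
    apply le_antisymm
    · exact csInf_le ⟨f i x, by rintro _ ⟨z, hz, rfl⟩; exact hxmin hz⟩ ⟨x, hx, rfl⟩
    · exact le_csInf himg (by rintro _ ⟨z, hz, rfl⟩; exact hxmin hz)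
  have hsup : sSup (f i '' B) = f i y := by
    apply le_antisymm
    · exact csSup_le himg (by rintro _ ⟨z, hz, rfl⟩; exact hymax hz)
    · exact le_csSup ⟨f i y, by rintro _ ⟨z, hz, rfl⟩; exact hymax hz⟩ ⟨y, hy, rfl⟩
  obtain ⟨h0lo, h0hi⟩ := hhull i
  rw [hinf] at h0lo
  rw [hsup] at h0hi
  have hdyx : |f i y - f i x| < δ :=
    hmod i y (hBB₀ hy) x (hBB₀ hx) (hsmall y hy x hx)
  have h1 : f i x ≤ f i a := hxmin ha
  have h2 : f i a ≤ f i y := hymax ha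
  rw [abs_lt] at hdyx ⊢
  constructor <;> nlinarith [hdyx.1, hdyx.2]
end

section
/- The box-consistent pruning operator is well-defined: for π_B(B, f) whose i-th interval is Iᵢ ∩ Hull({aᵢ ∈ ℝ : 0 ∈ ♯f(I₁,...,Hull({aᵢ}),...,Iₙ)}), conditions (W1) π_B(B,f) ⊆ B and (W3) B ∩ Z_f ⊆ π_B(B,f) hold, given that ♯f is an interval extension of f. -/
/-- The hull of a set of reals: the intersection of all closed intervals containing it. -/
def realHull (S : Set ℝ) : Set ℝ :=
  ⋂₀ {T : Set ℝ | (∃ a b : ℝ, T = Set.Icc a b) ∧ S ⊆ T}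

lemma subset_realHull (S : Set ℝ) : S ⊆ realHull S := by
  intro x hx T hT
  exact hT.2 hx

theorem stmt_15 (n : ℕ) (f : (Fin n → ℝ) → ℝ)
    (sharp : (Fin n → Set ℝ) → Set ℝ)
    (hext : ∀ (J : Fin n → Set ℝ) (x : Fin n → ℝ), (∀ i, x i ∈ J i) → f x ∈ sharp J)
    (I : Fin n → Set ℝ)
    (pruned : Fin n → Set ℝ)
    (hpruned : ∀ i, pruned i =
      I i ∩ realHull {a : ℝ | 0 ∈ sharp (Function.update I i (realHull {a}))}) :
    (∀ i, pruned i ⊆ I i) ∧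
    (∀ a : Fin n → ℝ, (∀ i, a i ∈ I i) → f a = 0 → ∀ i, a i ∈ pruned i) := by
  constructor
  · intro i
    rw [hpruned i]
    exact Set.inter_subset_left
  · intro a ha hfa i
    rw [hpruned i]
    refine ⟨ha i, subset_realHull _ ?_⟩
    have : (0 : ℝ) ∈ sharp (Function.update I i (realHull {a i})) := by
      rw [← hfa]
      apply hext
      intro j
      by_cases h : j = i
      · subst h; rw [Function.update_self]; exact subset_realHull _ rfl
      · rw [Function.update_of_ne h]; exact ha j
    exact this
end
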